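/- Let T and S be unbounded operators on a Hilbert space H with common dense domain V such that T V ⊆ V, the ranges Im(T) and Im(S) are orthogonal, ⟨Tα, β⟩ = ⟨α, Sβ⟩ for all α, β ∈ V, and T + S is essentially self-adjoint. Then the closure of T + S equals the restriction of T_min + S_min to Dom(T_min) ∩ Dom(S_min), and also equals the restriction of T_max + S_max to Dom(T_max) ∩ Dom(S_max). -/

import Mathlib

/-!
Here `T_max = Sp†` and `S_max = Tp†`. Orthogonality of the ranges gives, by Pythagoras,
`‖T α‖ ≤ ‖(T + S) α‖`, so along a sequence converging in the graph of `T + S` the `T`-parts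
converge too, and their limit splits the limit point between the graphs of `T_min` and `S_min`:
`closure (T + S) ≤ T_min + S_min`. As `T` and `S` are formal adjoints of each other,
`T_min + S_min ≤ T_max + S_max ≤ (T + S)†`, which is `closure (T + S)` by essential
self-adjointness, and the chain of inclusions closes up.
-/

open scoped RealInnerProductSpace
open LinearPMap Filter Topology

theorem norm_le_norm_add_of_inner_eq_zero {F : Type*} [NormedAddCommGroup F]
    [InnerProductSpace ℝ F] {x y : F} (h : ⟪x, y⟫ = 0) : ‖x‖ ≤ ‖x + y‖ :=
  (mul_self_le_mul_self_iff (norm_nonneg _) (norm_nonneg _)).mpr <| by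
    rw [norm_add_sq_eq_norm_sq_add_norm_sq_real h]
    exact le_add_of_nonneg_right (mul_self_nonneg _)

theorem LinearMap.cauchySeq_comp_of_norm_le_mul {R D F G : Type*} [Semiring R]
    [AddCommGroup D] [Module R D] [SeminormedAddCommGroup F] [Module R F]
    [SeminormedAddCommGroup G] [Module R G] (L : D →ₗ[R] F) (M : D →ₗ[R] G) {C : ℝ}
    (hLM : ∀ x, ‖L x‖ ≤ C * ‖M x‖) {a : ℕ → D} (ha : CauchySeq (M ∘ a)) :
    CauchySeq (L ∘ a) := by
  rw [cauchySeq_iff_tendsto_dist_atTop_0] at ha ⊢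
  refine squeeze_zero (fun _ ↦ dist_nonneg) (fun n ↦ ?_) (by simpa using ha.const_mul C)
  simpa only [Function.comp_apply, dist_eq_norm, ← _root_.map_sub] using hLM (a n.1 - a n.2)

namespace LinearPMap

section Algebra

variable {R E F : Type*} [Ring R] [AddCommGroup E] [Module R E] [AddCommGroup F] [Module R F]

theorem mem_graph_add {f g : E →ₗ.[R] F} {x : E} {y z : F} (hf : (x, y) ∈ f.graph)
    (hg : (x, z) ∈ g.graph) : (x, y + z) ∈ (f + g).graph := by
  have hx : x ∈ (f + g).domain := ⟨mem_domain_of_mem_graph hf, mem_domain_of_mem_graph hg⟩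
  rw [← image_iff hx, add_apply]
  exact congrArg₂ (· + ·) ((image_iff _).mpr hf) ((image_iff _).mpr hg)

theorem add_le_add {f f' g g' : E →ₗ.[R] F} (hf : f ≤ f') (hg : g ≤ g') : f + g ≤ f' + g' :=
  ⟨inf_le_inf hf.1 hg.1, fun x y hxy ↦ by
    simp only [add_apply]
    rw [hf.2 (x := ⟨x, x.2.1⟩) (y := ⟨y, y.2.1⟩) hxy,
      hg.2 (x := ⟨x, x.2.2⟩) (y := ⟨y, y.2.2⟩) hxy]⟩

end Algebra

section Closure

variable {𝕜 E F : Type*} [NormedField 𝕜] [NormedAddCommGroup E] [NormedSpace 𝕜 E]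
  [NormedAddCommGroup F] [NormedSpace 𝕜 F]

theorem IsClosable.mem_graph_closure_iff {f : E →ₗ.[𝕜] F} (hf : f.IsClosable) {p : E × F} :
    p ∈ f.closure.graph ↔ ∃ a : ℕ → f.domain,
      Tendsto (fun n ↦ (a n : E)) atTop (𝓝 p.1) ∧ Tendsto (fun n ↦ f (a n)) atTop (𝓝 p.2) := by
  rw [← hf.graph_closure_eq_closure_graph, ← SetLike.mem_coe,
    Submodule.topologicalClosure_coe, mem_closure_iff_seq_limit]
  constructor
  · rintro ⟨u, hu, hlim⟩
    choose a ha using fun n ↦ (mem_graph_iff f).mp (hu n)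
    refine ⟨a, ?_⟩
    simp only [(ha _).1, (ha _).2]
    exact Prod.tendsto_iff _ _ |>.mp hlim
  · rintro ⟨a, ha₁, ha₂⟩
    exact ⟨fun n ↦ ((a n : E), f (a n)), fun n ↦ f.mem_graph (a n), ha₁.prodMk_nhds ha₂⟩

theorem closure_add_le_of_norm_le_mul [CompleteSpace F] {f g : E →ₗ.[𝕜] F} (hf : f.IsClosable)
    (hg : g.IsClosable) (hfg : (f + g).IsClosable) {C : ℝ}
    (hbound : ∀ x : (f + g).domain, ‖f ⟨x, x.2.1⟩‖ ≤ C * ‖(f + g) x‖) :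
    (f + g).closure ≤ f.closure + g.closure := by
  refine le_of_le_graph fun p hp ↦ ?_
  obtain ⟨a, ha₁, ha₂⟩ := hfg.mem_graph_closure_iff.mp hp
  let fPart : (f + g).domain →ₗ[𝕜] F := f.toFun.comp (Submodule.inclusion inf_le_left)
  obtain ⟨w, hw⟩ := cauchySeq_tendsto_of_complete
    (fPart.cauchySeq_comp_of_norm_le_mul (f + g).toFun hbound ha₂.cauchySeq)
  have hfp : (p.1, w) ∈ f.closure.graph :=
    hf.mem_graph_closure_iff.mpr ⟨fun n ↦ ⟨a n, (a n).2.1⟩, ha₁, hw⟩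
  have hgp : (p.1, p.2 - w) ∈ g.closure.graph := by
    refine hg.mem_graph_closure_iff.mpr ⟨fun n ↦ ⟨a n, (a n).2.2⟩, ha₁, ?_⟩
    exact (ha₂.sub hw).congr fun n ↦ add_sub_cancel_left _ _
  simpa using mem_graph_add hfp hgp

end Closure

section Adjoint

variable {𝕜 E F : Type*} [RCLike 𝕜] [NormedAddCommGroup E] [InnerProductSpace 𝕜 E]
  [NormedAddCommGroup F] [InnerProductSpace 𝕜 F]

theorem IsFormalAdjoint.add {f₁ f₂ : E →ₗ.[𝕜] F} {g₁ g₂ : F →ₗ.[𝕜] E}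
    (h₁ : f₁.IsFormalAdjoint g₁) (h₂ : f₂.IsFormalAdjoint g₂) :
    (f₁ + f₂).IsFormalAdjoint (g₁ + g₂) := fun x y ↦ by
  simp only [add_apply, inner_add_left, inner_add_right]
  exact congrArg₂ (· + ·) (h₁ ⟨x, x.2.1⟩ ⟨y, y.2.1⟩) (h₂ ⟨x, x.2.2⟩ ⟨y, y.2.2⟩)

variable [CompleteSpace E]

theorem adjoint_add_adjoint_le {f g : E →ₗ.[𝕜] F} (hf : Dense (f.domain : Set E))
    (hg : Dense (g.domain : Set E)) (hfg : Dense ((f + g).domain : Set E)) :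
    f† + g† ≤ (f + g)† :=
  ((adjoint_isFormalAdjoint hf).symm.add (adjoint_isFormalAdjoint hg).symm).le_adjoint hfg

variable {T : E →ₗ.[𝕜] F} {S : F →ₗ.[𝕜] E}

theorem IsFormalAdjoint.isClosable (h : T.IsFormalAdjoint S) (hT : Dense (T.domain : Set E)) :
    S.IsClosable :=
  (adjoint_isClosed hT).isClosable.leIsClosable (h.le_adjoint hT)

theorem IsFormalAdjoint.closure_le_adjoint (h : T.IsFormalAdjoint S)
    (hT : Dense (T.domain : Set E)) : S.closure ≤ T† := by
  refine le_of_le_graph ?_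
  rw [← (h.isClosable hT).graph_closure_eq_closure_graph]
  exact Submodule.topologicalClosure_minimal _ (le_graph_of_le (h.le_adjoint hT))
    (adjoint_isClosed hT)

end Adjoint

end LinearPMap

theorem closure_of_sum_eq_min_sum_eq_max_sum_general
    {H : Type*} [NormedAddCommGroup H] [InnerProductSpace ℝ H] [CompleteSpace H]
    (V : Submodule ℝ H) (hdense : Dense (V : Set H))
    (T S : V →ₗ[ℝ] H)
    (hadj : ∀ α β : V, ⟪T α, (β : H)⟫ = ⟪(α : H), S β⟫)
    (horth : ∀ α β : V, ⟪T α, S β⟫ = 0)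
    (Tp Sp : H →ₗ.[ℝ] H) (hTp : Tp = ⟨V, T⟩) (hSp : Sp = ⟨V, S⟩)
    (hesa : (Tp + Sp).closure = (Tp + Sp)†) :
    (Tp + Sp).closure = Tp.closure + Sp.closure
      ∧ (Tp + Sp).closure = Sp† + Tp† := by
  have hTS : Tp.IsFormalAdjoint Sp := by subst hTp hSp; exact hadj
  have hdT : Dense (Tp.domain : Set H) := by subst hTp; exact hdense
  have hdS : Dense (Sp.domain : Set H) := by subst hSp; exact hdense
  have hdA : Dense ((Tp + Sp).domain : Set H) := by
    subst hTp hSp; rwa [add_domain, inf_idem]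
  have hsymm : (Tp + Sp).IsFormalAdjoint (Tp + Sp) := add_comm Sp Tp ▸ hTS.add hTS.symm
  have hdominated : ∀ x : (Tp + Sp).domain, ‖Tp ⟨x, x.2.1⟩‖ ≤ 1 * ‖(Tp + Sp) x‖ := by
    subst hTp hSp
    intro x
    rw [one_mul, LinearPMap.add_apply]
    exact norm_le_norm_add_of_inner_eq_zero (horth _ _)
  have hle_min : (Tp + Sp).closure ≤ Tp.closure + Sp.closure :=
    closure_add_le_of_norm_le_mul (hTS.symm.isClosable hdS) (hTS.isClosable hdT)
      (hsymm.isClosable hdA) hdominated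
  have hmin_le_max : Tp.closure + Sp.closure ≤ Sp† + Tp† :=
    LinearPMap.add_le_add (hTS.symm.closure_le_adjoint hdS) (hTS.closure_le_adjoint hdT)
  have hmax_le : Sp† + Tp† ≤ (Tp + Sp).closure := by
    rw [hesa, add_comm Tp]
    exact adjoint_add_adjoint_le hdS hdT (add_comm Tp Sp ▸ hdA)
  exact ⟨le_antisymm hle_min (hmin_le_max.trans hmax_le),
    le_antisymm (hle_min.trans hmin_le_max) hmax_le⟩

theorem closure_of_sum_eq_min_sum_eq_max_sum
    {H : Type*} [NormedAddCommGroup H] [InnerProductSpace ℝ H] [CompleteSpace H]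
    (V : Submodule ℝ H) (hdense : Dense (V : Set H))
    (T S : V →ₗ[ℝ] H)
    (hTV : ∀ v : V, T v ∈ V)
    (hadj : ∀ α β : V, ⟪T α, (β : H)⟫ = ⟪(α : H), S β⟫)
    (horth : ∀ α β : V, ⟪T α, S β⟫ = 0)
    (Tp Sp : H →ₗ.[ℝ] H) (hTp : Tp = ⟨V, T⟩) (hSp : Sp = ⟨V, S⟩)
    (hesa : (Tp + Sp).closure = (Tp + Sp)†) :
    (Tp + Sp).closure = Tp.closure + Sp.closure
      ∧ (Tp + Sp).closure = Sp† + Tp† :=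
  closure_of_sum_eq_min_sum_eq_max_sum_general V hdense T S hadj horth Tp Sp hTp hSp hesa
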